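/- A non-nilpotent δ-derivation of a finite-dimensional perfect complex Lie algebra has δ algebraic over ℚ. -/

import Mathlib

/-!
Let `L_λ` be the generalized eigenspaces of `D`. The δ-Leibniz rule gives
`(D - δ(λ + μ)) ⁅x, y⁆ = δ ⁅(D - λ) x, y⁆ + δ ⁅x, (D - μ) y⁆`, hence `⁅L_λ, L_μ⁆ ⊆ L_{δ(λ+μ)}`.
As `L = ⁅L, L⁆ = ∑ ⁅L_λ, L_μ⁆` and the sum of the `L_λ` is direct, every eigenvalue of `D` is
`δ(λ + μ)` for eigenvalues `λ, μ`. So multiplication by `δ⁻¹` preserves the ℚ-span of the finite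
spectrum, which is nonzero because `D` is not nilpotent; hence `δ⁻¹`, and with it `δ`, is
algebraic over ℚ.
-/

open Module End Submodule

theorem Module.End.mem_of_maxGenEigenspace_le_biSup {R M : Type*} [CommRing R] [IsDomain R]
    [AddCommGroup M] [Module R M] [IsTorsionFree R M] {f : Module.End R M} {T : Set R} {η : R}
    (hη : f.maxGenEigenspace η ≠ ⊥) (hle : f.maxGenEigenspace η ≤ ⨆ μ ∈ T, f.maxGenEigenspace μ) :
    η ∈ T := by
  by_contra hηT
  have hle' : ⨆ μ ∈ T, f.maxGenEigenspace μ ≤ ⨆ (μ) (_ : μ ≠ η), f.maxGenEigenspace μ :=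
    biSup_mono fun μ hμ => by rintro rfl; exact hηT hμ
  exact hη ((f.independent_maxGenEigenspace η).eq_bot_of_le (hle.trans hle'))

theorem Module.End.maxGenEigenspace_eq_bot_iff {R M : Type*} [CommRing R] [AddCommGroup M]
    [Module R M] {f : Module.End R M} {μ : R} :
    f.maxGenEigenspace μ = ⊥ ↔ ¬f.HasEigenvalue μ :=
  (hasUnifEigenvalue_iff_hasUnifEigenvalue_one (by simp)).not_right

theorem Module.End.exists_hasEigenvalue_ne_zero_of_not_isNilpotent {K V : Type*} [Field K]
    [IsAlgClosed K] [AddCommGroup V] [Module K V] [FiniteDimensional K V] {f : Module.End K V}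
    (hf : ¬IsNilpotent f) : ∃ μ ≠ 0, f.HasEigenvalue μ := by
  by_contra! h
  have hle : ∀ μ, f.maxGenEigenspace μ ≤ f.maxGenEigenspace 0 := fun μ => by
    rcases eq_or_ne μ 0 with rfl | hμ
    · exact le_rfl
    · simp [maxGenEigenspace_eq_bot_iff.mpr (h μ hμ)]
  refine hf (((LinearMap.charpoly_nilpotent_tfae f).out 0 2).mpr fun v => ?_)
  have hv : v ∈ f.maxGenEigenspace 0 := iSup_le hle (f.iSup_maxGenEigenspace_eq_top.ge mem_top)
  simpa using (f.mem_maxGenEigenspace 0 v).mp hv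

theorem isAlgebraic_of_forall_mem_mul_span {F K : Type*} [Field F] [Field K] [Algebra F K]
    {S : Set K} (hS : S.Finite) (hS₀ : ∃ s ∈ S, s ≠ 0) {x : K}
    (h : ∀ s ∈ S, ∃ t ∈ span F S, s = x * t) : IsAlgebraic F x := by
  rcases eq_or_ne x 0 with rfl | hx
  · exact isAlgebraic_zero
  have hinv : span F S ≤ (span F S).comap (LinearMap.mulLeft F x⁻¹) := by
    refine span_le.mpr fun s hs => ?_
    obtain ⟨t, ht, rfl⟩ := h s hs
    simpa [inv_mul_cancel_left₀ hx] using ht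
  obtain ⟨s, hs, hs₀⟩ := hS₀
  have hspan : span F S ≠ ⊥ := fun hb => hs₀ (by simpa [hb] using subset_span (R := F) hs)
  exact IsAlgebraic.inv_iff.mp
    (isIntegral_of_smul_mem_submodule _ hspan (fg_span hS) x⁻¹ fun v hv => hinv hv).isAlgebraic

theorem LieSubmodule.lieIdeal_oper_eq_map₂ {R L M : Type*} [CommRing R] [LieRing L]
    [LieAlgebra R L] [AddCommGroup M] [Module R M] [LieRingModule L M] [LieModule R L M]
    (I : LieIdeal R L) (N : LieSubmodule R L M) :
    ((⁅I, N⁆ : LieSubmodule R L M) : Submodule R M) =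
      map₂ (LieModule.toEnd R L M : L →ₗ[R] Module.End R M) I N := by
  rw [lieIdeal_oper_eq_linear_span', map₂_eq_span_image2]
  rfl

def IsDeltaDerivation {R L : Type*} [CommRing R] [LieRing L] [LieAlgebra R L] (δ : R)
    (D : Module.End R L) : Prop :=
  ∀ x y : L, D ⁅x, y⁆ = δ • ⁅D x, y⁆ + δ • ⁅x, D y⁆

namespace IsDeltaDerivation

section

variable {R L : Type*} [CommRing R] [LieRing L] [LieAlgebra R L] {δ : R} {D : Module.End R L}

theorem sub_smul_one_apply_lie (hD : IsDeltaDerivation δ D) (l m : R) (x y : L) :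
    (D - (δ * (l + m)) • 1) ⁅x, y⁆ = δ • ⁅(D - l • 1) x, y⁆ + δ • ⁅x, (D - m • 1) y⁆ := by
  simp only [LinearMap.sub_apply, LinearMap.smul_apply, one_apply, hD x y, sub_lie, lie_sub,
    smul_lie, lie_smul, smul_sub, smul_smul]
  module

theorem pow_sub_smul_one_apply_lie_eq_zero (hD : IsDeltaDerivation δ D) {l m : R} :
    ∀ {k n p : ℕ} {x y : L}, n + p ≤ k → ((D - l • 1) ^ n) x = 0 → ((D - m • 1) ^ p) y = 0 →
      ((D - (δ * (l + m)) • 1) ^ k) ⁅x, y⁆ = 0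
  | 0, n, _, _, _, hk, hx, _ => by
    obtain rfl : n = 0 := by omega
    simp_all
  | _, 0, _, _, _, _, hx, _ => by simp_all
  | _, _, 0, _, _, _, _, hy => by simp_all
  | k + 1, n + 1, p + 1, x, y, hk, hx, hy => by
    rw [pow_succ, mul_apply, hD.sub_smul_one_apply_lie, map_add, map_smul, map_smul,
      pow_sub_smul_one_apply_lie_eq_zero hD (n := n) (p := p + 1) (by omega)
        (by rwa [← mul_apply, ← pow_succ]) hy,
      pow_sub_smul_one_apply_lie_eq_zero hD (n := n + 1) (p := p) (by omega) hx
        (by rwa [← mul_apply, ← pow_succ]), smul_zero, add_zero]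

theorem lie_mem_maxGenEigenspace (hD : IsDeltaDerivation δ D) {l m : R} {x y : L}
    (hx : x ∈ D.maxGenEigenspace l) (hy : y ∈ D.maxGenEigenspace m) :
    ⁅x, y⁆ ∈ D.maxGenEigenspace (δ * (l + m)) := by
  rw [mem_maxGenEigenspace] at hx hy ⊢
  obtain ⟨n, hn⟩ := hx
  obtain ⟨p, hp⟩ := hy
  exact ⟨n + p, hD.pow_sub_smul_one_apply_lie_eq_zero le_rfl hn hp⟩

end

theorem exists_eq_mul_add_of_hasEigenvalue {K L : Type*} [Field K] [IsAlgClosed K]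
    [LieRing L] [LieAlgebra K L] [FiniteDimensional K L] {δ : K} {D : Module.End K L}
    (hD : IsDeltaDerivation δ D)
    (hperf : ⁅(⊤ : LieIdeal K L), (⊤ : LieIdeal K L)⁆ = ⊤) {η : K} (hη : D.HasEigenvalue η) :
    ∃ l m, D.HasEigenvalue l ∧ D.HasEigenvalue m ∧ η = δ * (l + m) := by
  set T := {η | ∃ l m, D.HasEigenvalue l ∧ D.HasEigenvalue m ∧ η = δ * (l + m)}
  set bracket := (LieModule.toEnd K L L : L →ₗ[K] Module.End K L)
  have hbracket : ∀ l m, map₂ bracket (D.maxGenEigenspace l) (D.maxGenEigenspace m) ≤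
      ⨆ μ ∈ T, D.maxGenEigenspace μ := by
    intro l m
    by_cases hl : D.HasEigenvalue l
    · by_cases hm : D.HasEigenvalue m
      · exact (map₂_le.mpr fun x hx y hy => hD.lie_mem_maxGenEigenspace hx hy).trans
          (le_biSup _ ⟨l, m, hl, hm, rfl⟩)
      · simp [maxGenEigenspace_eq_bot_iff.mpr hm]
    · simp [maxGenEigenspace_eq_bot_iff.mpr hl]
  refine mem_of_maxGenEigenspace_le_biSup (T := T)
    (fun h => maxGenEigenspace_eq_bot_iff.mp h hη) ?_
  have hderived : map₂ bracket ⊤ ⊤ = ⊤ := by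
    simpa [LieSubmodule.lieIdeal_oper_eq_map₂] using congrArg LieSubmodule.toSubmodule hperf
  calc D.maxGenEigenspace η
      ≤ map₂ bracket (⨆ l, D.maxGenEigenspace l) (⨆ m, D.maxGenEigenspace m) := by
        rw [iSup_maxGenEigenspace_eq_top, hderived]
        exact le_top
    _ = ⨆ (l) (m), map₂ bracket (D.maxGenEigenspace l) (D.maxGenEigenspace m) := by
        simp_rw [map₂_iSup_left, map₂_iSup_right]
    _ ≤ ⨆ μ ∈ T, D.maxGenEigenspace μ := iSup₂_le hbracket

end IsDeltaDerivation

/-- For a non-nilpotent δ-derivation of a finite-dimensional perfect complex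
Lie algebra, δ is algebraic over ℚ. -/
theorem delta_algebraic_of_non_nilpotent (L : Type*) [LieRing L]
    [LieAlgebra ℂ L] [FiniteDimensional ℂ L]
    (hperf : ⁅(⊤ : LieIdeal ℂ L), (⊤ : LieIdeal ℂ L)⁆ = ⊤)
    (δ : ℂ) (D : Module.End ℂ L)
    (hD : ∀ x y : L, D ⁅x, y⁆ = δ • ⁅D x, y⁆ + δ • ⁅x, D y⁆)
    (hnil : ¬ IsNilpotent D) :
    IsAlgebraic ℚ δ := by
  obtain ⟨η, hη₀, hη⟩ := D.exists_hasEigenvalue_ne_zero_of_not_isNilpotent hnil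
  refine isAlgebraic_of_forall_mem_mul_span D.finite_hasEigenvalue ⟨η, hη, hη₀⟩ fun μ hμ => ?_
  obtain ⟨l, m, hl, hm, rfl⟩ := IsDeltaDerivation.exists_eq_mul_add_of_hasEigenvalue hD hperf hμ
  exact ⟨l + m, add_mem (subset_span hl) (subset_span hm), rfl⟩
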